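/- Let (M, λ_i) be an AP-space on ℝⁿ with n ≥ 2. The connection 𝚪°^α_{μν} := Γ°^α_{μν} − (1/(n−1))(δ^α_μ C_ν + δ^α_ν C_μ − g_{μν} C^α) is a conformal connection (for every conformal change λ̄_i = e^{−ρ} λ_i with smooth ρ, the connection built from the λ̄_i equals 𝚪°), and consequently its curvature tensor Q^α_{μνσ} := ∂_ν 𝚪°^α_{μσ} − ∂_σ 𝚪°^α_{μν} + 𝚪°^ε_{μσ} 𝚪°^α_{εν} − 𝚪°^ε_{μν} 𝚪°^α_{εσ} is conformally invariant. -/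

import Mathlib

open scoped BigOperators

noncomputable section

/-- Kronecker delta as a real number. -/
def kron {n : ℕ} (α μ : Fin n) : ℝ := if α = μ then 1 else 0

/-- Partial derivative `∂_ν f` of a scalar function on ℝⁿ. -/
def pd {n : ℕ} (ν : Fin n) (f : (Fin n → ℝ) → ℝ) (x : Fin n → ℝ) : ℝ :=
  fderiv ℝ f x (Pi.single ν 1)

/-- Weitzenböck connection `Γ^α_{μν} = Σ_i λ_i^α ∂_ν λ_{i,μ}`. -/
def Wconn {n : ℕ} (lam lamCov : Fin n → (Fin n → ℝ) → Fin n → ℝ)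
    (α μ ν : Fin n) (x : Fin n → ℝ) : ℝ :=
  ∑ i, lam i x α * pd ν (fun y => lamCov i y μ) x

/-- Torsion `Λ^α_{μν}` of the Weitzenböck connection. -/
def tors {n : ℕ} (lam lamCov : Fin n → (Fin n → ℝ) → Fin n → ℝ)
    (α μ ν : Fin n) (x : Fin n → ℝ) : ℝ :=
  Wconn lam lamCov α μ ν x - Wconn lam lamCov α ν μ x

/-- Contracted torsion (basic vector) `C_μ = Λ^ε_{εμ}`. -/
def Cvec {n : ℕ} (lam lamCov : Fin n → (Fin n → ℝ) → Fin n → ℝ)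
    (μ : Fin n) (x : Fin n → ℝ) : ℝ :=
  ∑ ε, tors lam lamCov ε ε μ x

/-- Metric `g_{μν} = Σ_i λ_{i,μ} λ_{i,ν}`. -/
def gmet {n : ℕ} (lamCov : Fin n → (Fin n → ℝ) → Fin n → ℝ)
    (μ ν : Fin n) (x : Fin n → ℝ) : ℝ :=
  ∑ i, lamCov i x μ * lamCov i x ν

/-- Inverse metric `g^{μν} = Σ_i λ_i^μ λ_i^ν`. -/
def ginv {n : ℕ} (lam : Fin n → (Fin n → ℝ) → Fin n → ℝ)
    (μ ν : Fin n) (x : Fin n → ℝ) : ℝ :=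
  ∑ i, lam i x μ * lam i x ν

/-- Levi-Civita connection (Christoffel symbols) of the metric `g`. -/
def LC {n : ℕ} (lam lamCov : Fin n → (Fin n → ℝ) → Fin n → ℝ)
    (α μ ν : Fin n) (x : Fin n → ℝ) : ℝ :=
  (1/2) * ∑ ε, ginv lam α ε x *
    (pd μ (fun y => gmet lamCov ε ν y) x + pd ν (fun y => gmet lamCov ε μ y) x
      - pd ε (fun y => gmet lamCov μ ν y) x)

/-- Curvature tensor `R[A]^α_{μνσ}` of connection coefficients `A`. -/
def curv {n : ℕ} (A : Fin n → Fin n → Fin n → (Fin n → ℝ) → ℝ)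
    (α μ ν σ : Fin n) (x : Fin n → ℝ) : ℝ :=
  pd ν (A α μ σ) x - pd σ (A α μ ν) x
    + ∑ ε, A ε μ σ x * A α ε ν x - ∑ ε, A ε μ ν x * A α ε σ x

/-- Conformal change of the contravariant components: `λ̄_i^μ = e^{-ρ} λ_i^μ`. -/
def confLam {n : ℕ} (ρ : (Fin n → ℝ) → ℝ) (lam : Fin n → (Fin n → ℝ) → Fin n → ℝ) :
    Fin n → (Fin n → ℝ) → Fin n → ℝ :=
  fun i x μ => Real.exp (-(ρ x)) * lam i x μ

/-- Conformal change of the covariant components: `λ̄_{i,μ} = e^{ρ} λ_{i,μ}`. -/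
def confLamCov {n : ℕ} (ρ : (Fin n → ℝ) → ℝ) (lamCov : Fin n → (Fin n → ℝ) → Fin n → ℝ) :
    Fin n → (Fin n → ℝ) → Fin n → ℝ :=
  fun i x μ => Real.exp (ρ x) * lamCov i x μ

/-- `ρ^α := g^{αε} ρ_ε`. -/
def rhoUp {n : ℕ} (lam : Fin n → (Fin n → ℝ) → Fin n → ℝ) (ρ : (Fin n → ℝ) → ℝ)
    (α : Fin n) (x : Fin n → ℝ) : ℝ :=
  ∑ ε, ginv lam α ε x * pd ε ρ x

/-- `ρ² := ρ^ε ρ_ε`. -/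
def rhoSq {n : ℕ} (lam : Fin n → (Fin n → ℝ) → Fin n → ℝ) (ρ : (Fin n → ℝ) → ℝ)
    (x : Fin n → ℝ) : ℝ :=
  ∑ ε, rhoUp lam ρ ε x * pd ε ρ x

/-- Covariant derivative of a covector field: `X_{μ|ν} = ∂_ν X_μ − A^ε_{μν} X_ε`. -/
def covD {n : ℕ} (A : Fin n → Fin n → Fin n → (Fin n → ℝ) → ℝ)
    (X : Fin n → (Fin n → ℝ) → ℝ) (μ ν : Fin n) (x : Fin n → ℝ) : ℝ :=
  pd ν (X μ) x - ∑ ε, A ε μ ν x * X ε x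

/-- Covariant derivative of a vector field: `X^α_{|ν} = ∂_ν X^α + A^α_{εν} X^ε`. -/
def covDUp {n : ℕ} (A : Fin n → Fin n → Fin n → (Fin n → ℝ) → ℝ)
    (X : Fin n → (Fin n → ℝ) → ℝ) (α ν : Fin n) (x : Fin n → ℝ) : ℝ :=
  pd ν (X α) x + ∑ ε, A α ε ν x * X ε x

/-- Symmetric part `Γ̂^α_{μν}` of the Weitzenböck connection. -/
def symW {n : ℕ} (lam lamCov : Fin n → (Fin n → ℝ) → Fin n → ℝ)
    (α μ ν : Fin n) (x : Fin n → ℝ) : ℝ :=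
  (1/2) * (Wconn lam lamCov α μ ν x + Wconn lam lamCov α ν μ x)

/-- The conformally invariant tensor `T^α_{μν}`. -/
def Ttens {n : ℕ} (lam lamCov : Fin n → (Fin n → ℝ) → Fin n → ℝ)
    (α μ ν : Fin n) (x : Fin n → ℝ) : ℝ :=
  tors lam lamCov α μ ν x
    - ((n : ℝ) - 1)⁻¹ * (kron α μ * Cvec lam lamCov ν x - kron α ν * Cvec lam lamCov μ x)

/-- The conformally invariant tensor `K^α_{μνσ}`. -/
def Ktens {n : ℕ} (lam lamCov : Fin n → (Fin n → ℝ) → Fin n → ℝ)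
    (α μ ν σ : Fin n) (x : Fin n → ℝ) : ℝ :=
  ((n : ℝ) - 1)⁻¹ *
    (kron α μ * pd σ (Cvec lam lamCov ν) x - kron α μ * pd ν (Cvec lam lamCov σ) x)

/-- The conformal connection `𝚪^α_{μν} = Γ^α_{μν} − (1/(n−1)) δ^α_μ C_ν`. -/
def bConn {n : ℕ} (lam lamCov : Fin n → (Fin n → ℝ) → Fin n → ℝ)
    (α μ ν : Fin n) (x : Fin n → ℝ) : ℝ :=
  Wconn lam lamCov α μ ν x - ((n : ℝ) - 1)⁻¹ * (kron α μ * Cvec lam lamCov ν x)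

/-- The conformal connection `𝚪̂^α_{μν} = Γ̂^α_{μν} − (1/(2(n−1)))(δ^α_μ C_ν + δ^α_ν C_μ)`. -/
def hatConn {n : ℕ} (lam lamCov : Fin n → (Fin n → ℝ) → Fin n → ℝ)
    (α μ ν : Fin n) (x : Fin n → ℝ) : ℝ :=
  symW lam lamCov α μ ν x
    - (2 * ((n : ℝ) - 1))⁻¹ * (kron α μ * Cvec lam lamCov ν x + kron α ν * Cvec lam lamCov μ x)

/-- `C_{μ ĥ|ν}`: covariant derivative of `C` with respect to `Γ̂`. -/
def Chat {n : ℕ} (lam lamCov : Fin n → (Fin n → ℝ) → Fin n → ℝ)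
    (μ ν : Fin n) (x : Fin n → ℝ) : ℝ :=
  covD (symW lam lamCov) (Cvec lam lamCov) μ ν x

/-- The conformally invariant tensor `B^α_{μνσ}`. -/
def Btens {n : ℕ} (lam lamCov : Fin n → (Fin n → ℝ) → Fin n → ℝ)
    (α μ ν σ : Fin n) (x : Fin n → ℝ) : ℝ :=
  curv (symW lam lamCov) α μ ν σ x
    - (2 * ((n : ℝ) - 1))⁻¹ *
      (kron α μ * pd ν (Cvec lam lamCov σ) x - kron α μ * pd σ (Cvec lam lamCov ν) x
        + kron α σ * Chat lam lamCov μ ν x - kron α ν * Chat lam lamCov μ σ x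
        - (2 * ((n : ℝ) - 1))⁻¹ * kron α ν * Cvec lam lamCov μ x * Cvec lam lamCov σ x
        + (2 * ((n : ℝ) - 1))⁻¹ * kron α σ * Cvec lam lamCov μ x * Cvec lam lamCov ν x)

/-- `C^σ := g^{σε} C_ε`. -/
def Cup {n : ℕ} (lam lamCov : Fin n → (Fin n → ℝ) → Fin n → ℝ)
    (σ : Fin n) (x : Fin n → ℝ) : ℝ :=
  ∑ ε, ginv lam σ ε x * Cvec lam lamCov ε x

/-- `C² := C_ε C^ε = g^{εη} C_ε C_η`. -/
def Csq {n : ℕ} (lam lamCov : Fin n → (Fin n → ℝ) → Fin n → ℝ)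
    (x : Fin n → ℝ) : ℝ :=
  ∑ ε, Cvec lam lamCov ε x * Cup lam lamCov ε x

/-- The tensor `S_{μν} := ρ_{μ;ν} − ρ_μ ρ_ν − ½ g_{μν} ρ²`. -/
def Stens {n : ℕ} (lam lamCov : Fin n → (Fin n → ℝ) → Fin n → ℝ)
    (ρ : (Fin n → ℝ) → ℝ) (μ ν : Fin n) (x : Fin n → ℝ) : ℝ :=
  covD (LC lam lamCov) (fun μ => pd μ ρ) μ ν x
    - pd μ ρ x * pd ν ρ x - (1/2) * gmet lamCov μ ν x * rhoSq lam ρ x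

/-- The conformal connection `𝚪°^α_{μν} = Γ°^α_{μν} − (1/(n−1))(δ^α_μ C_ν + δ^α_ν C_μ − g_{μν} C^α)`. -/
def oConn {n : ℕ} (lam lamCov : Fin n → (Fin n → ℝ) → Fin n → ℝ)
    (α μ ν : Fin n) (x : Fin n → ℝ) : ℝ :=
  LC lam lamCov α μ ν x
    - ((n : ℝ) - 1)⁻¹ *
      (kron α μ * Cvec lam lamCov ν x + kron α ν * Cvec lam lamCov μ x
        - gmet lamCov μ ν x * Cup lam lamCov α x)

end


section APauxLemmas
variable {n : ℕ}

lemma pd_mul' {f g : (Fin n → ℝ) → ℝ} {x : Fin n → ℝ} (ν : Fin n)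
    (hf : DifferentiableAt ℝ f x) (hg : DifferentiableAt ℝ g x) :
    pd ν (fun y => f y * g y) x = pd ν f x * g x + f x * pd ν g x := by
  unfold pd
  rw [fderiv_fun_mul hf hg]
  simp only [ContinuousLinearMap.add_apply, ContinuousLinearMap.smul_apply, smul_eq_mul]
  ring

lemma pd_exp' {ρ : (Fin n → ℝ) → ℝ} {x : Fin n → ℝ} (ν : Fin n)
    (hρ : DifferentiableAt ℝ ρ x) :
    pd ν (fun y => Real.exp (ρ y)) x = Real.exp (ρ x) * pd ν ρ x := by
  unfold pd
  rw [fderiv_exp hρ]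
  simp

end APauxLemmas

theorem oConn_conformal_and_Q_invariant
    {n : ℕ} (hn : 2 ≤ n)
    (lam lamCov : Fin n → (Fin n → ℝ) → Fin n → ℝ)
    (hlam : ∀ i μ, ContDiff ℝ (⊤ : ℕ∞) fun x => lam i x μ)
    (hlamCov : ∀ i μ, ContDiff ℝ (⊤ : ℕ∞) fun x => lamCov i x μ)
    (hinv : ∀ (x : Fin n → ℝ) (μ ν : Fin n), ∑ i, lam i x μ * lamCov i x ν = kron μ ν)
    (hinv' : ∀ (x : Fin n → ℝ) (i j : Fin n), ∑ μ, lam i x μ * lamCov j x μ = kron i j)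
    :
    (∀ (ρ : (Fin n → ℝ) → ℝ), ContDiff ℝ (⊤ : ℕ∞) ρ →
      ∀ (x : Fin n → ℝ) (α μ ν : Fin n),
        oConn (confLam ρ lam) (confLamCov ρ lamCov) α μ ν x
          = oConn lam lamCov α μ ν x)
    ∧ (∀ (ρ : (Fin n → ℝ) → ℝ), ContDiff ℝ (⊤ : ℕ∞) ρ →
      ∀ (x : Fin n → ℝ) (α μ ν σ : Fin n),
        curv (oConn (confLam ρ lam) (confLamCov ρ lamCov)) α μ ν σ x
          = curv (oConn lam lamCov) α μ ν σ x) := by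
  have hn1 : ((n : ℝ) - 1) ≠ 0 := by
    have : (2:ℝ) ≤ (n:ℝ) := by exact_mod_cast hn
    linarith
  have hdc : ∀ (i μ : Fin n) (x : Fin n → ℝ), DifferentiableAt ℝ (fun y => lamCov i y μ) x :=
    fun i μ x => (hlamCov i μ).differentiable (by simp) x
  have hdg : ∀ (μ ν : Fin n) (x : Fin n → ℝ), DifferentiableAt ℝ (fun y => gmet lamCov μ ν y) x := by
    intro μ ν x
    simp only [gmet]
    exact DifferentiableAt.fun_sum fun i _ => (hdc i μ x).mul (hdc i ν x)
  have hgg : ∀ (x : Fin n → ℝ) (α ν : Fin n),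
      ∑ ε, ginv lam α ε x * gmet lamCov ε ν x = kron α ν := by
    intro x α ν
    simp only [ginv, gmet]
    calc ∑ ε, (∑ i, lam i x α * lam i x ε) * (∑ j, lamCov j x ε * lamCov j x ν)
        = ∑ ε, ∑ i, ∑ j, (lam i x α * lamCov j x ν) * (lam i x ε * lamCov j x ε) := by
          refine Finset.sum_congr rfl fun ε _ => ?_
          rw [Finset.sum_mul]
          refine Finset.sum_congr rfl fun i _ => ?_
          rw [Finset.mul_sum]
          exact Finset.sum_congr rfl fun j _ => by ring
      _ = ∑ i, ∑ j, (lam i x α * lamCov j x ν) * (∑ ε, lam i x ε * lamCov j x ε) := by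
          rw [Finset.sum_comm]
          refine Finset.sum_congr rfl fun i _ => ?_
          rw [Finset.sum_comm]
          refine Finset.sum_congr rfl fun j _ => ?_
          rw [Finset.mul_sum]
      _ = ∑ i, ∑ j, (lam i x α * lamCov j x ν) * kron i j := by
          exact Finset.sum_congr rfl fun i _ => Finset.sum_congr rfl fun j _ => by
            rw [hinv' x i j]
      _ = ∑ i, lam i x α * lamCov i x ν := by
          refine Finset.sum_congr rfl fun i _ => ?_
          simp [kron, mul_ite]
      _ = kron α ν := hinv x α ν
  have part1 : ∀ (ρ : (Fin n → ℝ) → ℝ), ContDiff ℝ (⊤ : ℕ∞) ρ →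
      ∀ (x : Fin n → ℝ) (α μ ν : Fin n),
        oConn (confLam ρ lam) (confLamCov ρ lamCov) α μ ν x
          = oConn lam lamCov α μ ν x := by
    intro ρ hρ
    have hdρ : ∀ x : Fin n → ℝ, DifferentiableAt ℝ ρ x := fun x => hρ.differentiable (by simp) x
    have hW : ∀ (x : Fin n → ℝ) (α μ ν : Fin n),
        Wconn (confLam ρ lam) (confLamCov ρ lamCov) α μ ν x
          = Wconn lam lamCov α μ ν x + kron α μ * pd ν ρ x := by
      intro x α μ ν
      have key : ∀ i : Fin n, (confLam ρ lam i x α) * pd ν (fun y => confLamCov ρ lamCov i y μ) x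
          = lam i x α * lamCov i x μ * pd ν ρ x + lam i x α * pd ν (fun y => lamCov i y μ) x := by
        intro i
        simp only [confLam, confLamCov]
        rw [pd_mul' ν ((hdρ x).exp) (hdc i μ x), pd_exp' ν (hdρ x), Real.exp_neg]
        field_simp
      simp only [Wconn]
      rw [Finset.sum_congr rfl fun i _ => key i, Finset.sum_add_distrib, ← Finset.sum_mul,
        hinv x α μ]
      ring
    have hC : ∀ (x : Fin n → ℝ) (μ : Fin n),
        Cvec (confLam ρ lam) (confLamCov ρ lamCov) μ x
          = Cvec lam lamCov μ x + ((n:ℝ) - 1) * pd μ ρ x := by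
      intro x μ
      have h1 : ∑ ε : Fin n, kron ε ε * pd μ ρ x = (n:ℝ) * pd μ ρ x := by
        simp [kron, Finset.card_univ]
      have h2 : ∑ ε : Fin n, kron ε μ * pd ε ρ x = pd μ ρ x := by
        simp [kron, ite_mul]
      simp only [Cvec, tors, hW]
      have h3 : ∀ ε : Fin n,
          Wconn lam lamCov ε ε μ x + kron ε ε * pd μ ρ x
            - (Wconn lam lamCov ε μ ε x + kron ε μ * pd ε ρ x)
          = (Wconn lam lamCov ε ε μ x - Wconn lam lamCov ε μ ε x)
            + (kron ε ε * pd μ ρ x - kron ε μ * pd ε ρ x) := fun ε => by ring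
      rw [Finset.sum_congr rfl fun ε _ => h3 ε, Finset.sum_add_distrib,
        Finset.sum_sub_distrib, Finset.sum_sub_distrib, h1, h2]
      ring
    have hg : ∀ (x : Fin n → ℝ) (μ ν : Fin n),
        gmet (confLamCov ρ lamCov) μ ν x
          = Real.exp (ρ x) * Real.exp (ρ x) * gmet lamCov μ ν x := by
      intro x μ ν
      simp only [gmet, confLamCov, Finset.mul_sum]
      exact Finset.sum_congr rfl fun i _ => by ring
    have hginv : ∀ (x : Fin n → ℝ) (μ ν : Fin n),
        ginv (confLam ρ lam) μ ν x
          = Real.exp (-(ρ x)) * Real.exp (-(ρ x)) * ginv lam μ ν x := by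
      intro x μ ν
      simp only [ginv, confLam, Finset.mul_sum]
      exact Finset.sum_congr rfl fun i _ => by ring
    have hpdg : ∀ (κ ε ν : Fin n) (x : Fin n → ℝ),
        pd κ (fun y => gmet (confLamCov ρ lamCov) ε ν y) x
          = Real.exp (ρ x) * Real.exp (ρ x) *
            (2 * pd κ ρ x * gmet lamCov ε ν x + pd κ (fun y => gmet lamCov ε ν y) x) := by
      intro κ ε ν x
      have hfun : (fun y => gmet (confLamCov ρ lamCov) ε ν y)
          = fun y => (Real.exp (ρ y) * Real.exp (ρ y)) * gmet lamCov ε ν y :=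
        funext fun y => hg y ε ν
      rw [hfun]
      have hE : DifferentiableAt ℝ (fun z => Real.exp (ρ z)) x := (hdρ x).exp
      rw [pd_mul' κ (hE.fun_mul hE) (hdg ε ν x), pd_mul' κ hE hE, pd_exp' κ (hdρ x)]
      ring
    have hLC : ∀ (x : Fin n → ℝ) (α μ ν : Fin n),
        LC (confLam ρ lam) (confLamCov ρ lamCov) α μ ν x
          = LC lam lamCov α μ ν x + kron α μ * pd ν ρ x + kron α ν * pd μ ρ x
            - gmet lamCov μ ν x * rhoUp lam ρ α x := by
      intro x α μ ν
      simp only [LC]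
      have step : ∀ ε : Fin n,
          ginv (confLam ρ lam) α ε x *
            (pd μ (fun y => gmet (confLamCov ρ lamCov) ε ν y) x
              + pd ν (fun y => gmet (confLamCov ρ lamCov) ε μ y) x
              - pd ε (fun y => gmet (confLamCov ρ lamCov) μ ν y) x)
          = ginv lam α ε x *
              (pd μ (fun y => gmet lamCov ε ν y) x + pd ν (fun y => gmet lamCov ε μ y) x
                - pd ε (fun y => gmet lamCov μ ν y) x)
            + 2 * (pd μ ρ x * (ginv lam α ε x * gmet lamCov ε ν x)
                + pd ν ρ x * (ginv lam α ε x * gmet lamCov ε μ x)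
                - (ginv lam α ε x * pd ε ρ x) * gmet lamCov μ ν x) := by
        intro ε
        rw [hginv x α ε, hpdg μ ε ν x, hpdg ν ε μ x, hpdg ε μ ν x, Real.exp_neg]
        field_simp
        ring
      rw [Finset.sum_congr rfl fun ε _ => step ε, Finset.sum_add_distrib]
      have e1 : ∑ ε, pd μ ρ x * (ginv lam α ε x * gmet lamCov ε ν x)
          = pd μ ρ x * kron α ν := by
        rw [← Finset.mul_sum, hgg x α ν]
      have e2 : ∑ ε, pd ν ρ x * (ginv lam α ε x * gmet lamCov ε μ x)
          = pd ν ρ x * kron α μ := by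
        rw [← Finset.mul_sum, hgg x α μ]
      have e3 : ∑ ε, (ginv lam α ε x * pd ε ρ x) * gmet lamCov μ ν x
          = rhoUp lam ρ α x * gmet lamCov μ ν x := by
        rw [← Finset.sum_mul]
        simp only [rhoUp]
      have hsplit : ∑ ε, 2 * (pd μ ρ x * (ginv lam α ε x * gmet lamCov ε ν x)
              + pd ν ρ x * (ginv lam α ε x * gmet lamCov ε μ x)
              - (ginv lam α ε x * pd ε ρ x) * gmet lamCov μ ν x)
          = 2 * (pd μ ρ x * kron α ν + pd ν ρ x * kron α μ
              - rhoUp lam ρ α x * gmet lamCov μ ν x) := by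
        rw [← Finset.mul_sum, Finset.sum_sub_distrib, Finset.sum_add_distrib, e1, e2, e3]
      rw [hsplit]
      ring
    have hCup : ∀ (x : Fin n → ℝ) (α : Fin n),
        Cup (confLam ρ lam) (confLamCov ρ lamCov) α x
          = Real.exp (-(ρ x)) * Real.exp (-(ρ x)) *
            (Cup lam lamCov α x + ((n:ℝ) - 1) * rhoUp lam ρ α x) := by
      intro x α
      simp only [Cup]
      calc ∑ ε, ginv (confLam ρ lam) α ε x * Cvec (confLam ρ lam) (confLamCov ρ lamCov) ε x
          = ∑ ε, Real.exp (-(ρ x)) * Real.exp (-(ρ x)) *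
              (ginv lam α ε x * Cvec lam lamCov ε x
                + ((n:ℝ) - 1) * (ginv lam α ε x * pd ε ρ x)) := by
            refine Finset.sum_congr rfl fun ε _ => ?_
            rw [hginv x α ε, hC x ε]
            ring
        _ = Real.exp (-(ρ x)) * Real.exp (-(ρ x)) *
              ((∑ ε, ginv lam α ε x * Cvec lam lamCov ε x)
                + ((n:ℝ) - 1) * ∑ ε, ginv lam α ε x * pd ε ρ x) := by
            rw [← Finset.mul_sum, Finset.sum_add_distrib, ← Finset.mul_sum]
        _ = Real.exp (-(ρ x)) * Real.exp (-(ρ x)) *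
              (Cup lam lamCov α x + ((n:ℝ) - 1) * rhoUp lam ρ α x) := by
            simp only [Cup, rhoUp]
    intro x α μ ν
    simp only [oConn]
    rw [hLC x α μ ν, hC x ν, hC x μ, hg x μ ν, hCup x α, Real.exp_neg]
    field_simp
    ring
  refine ⟨part1, ?_⟩
  intro ρ hρ x α μ ν σ
  have hfun : oConn (confLam ρ lam) (confLamCov ρ lamCov) = oConn lam lamCov := by
    funext α μ ν x
    exact part1 ρ hρ x α μ ν
  rw [hfun]
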